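/- Call a trigonometric polynomial μ irreducible if in every factorization μ = γ·η into trigonometric polynomials, at least one of γ, η has degree (0,0). If μ is irreducible and ν is a trigonometric polynomial such that the set of common zeros {r ∈ [0,1)² : μ(r) = ν(r) = 0} is infinite, then μ divides ν. -/

import Mathlib

open MeasureTheory Set
open scoped Pointwise

noncomputable section

/-- The unit square `[0,1]²`. -/
def box : Set (ℝ × ℝ) := Set.Icc (0:ℝ) 1 ×ˢ Set.Icc (0:ℝ) 1

/-- The complex exponential `e^{2πi k·r}` with integer frequency `k`. -/
def e2 (k : ℤ × ℤ) (r : ℝ × ℝ) : ℂ :=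
  Complex.exp (2 * Real.pi * Complex.I * ((k.1 : ℂ) * (r.1 : ℂ) + (k.2 : ℂ) * (r.2 : ℂ)))

/-- The trigonometric sum with coefficient support `Λ` and coefficients `c`. -/
def trigSum (Λ : Finset (ℤ × ℤ)) (c : ℤ × ℤ → ℂ) : (ℝ × ℝ) → ℂ :=
  fun r => ∑ k ∈ Λ, c k * e2 k r

/-- The Fourier coefficient `f̂[m] = ∫_{[0,1]²} f(r) e^{-2πi m·r} dr`. -/
def fourierCoeff2 (f : ℝ × ℝ → ℂ) (m : ℤ × ℤ) : ℂ :=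
  ∫ r in box, f r * Complex.exp (-(2 * Real.pi * Complex.I *
    ((m.1 : ℂ) * (r.1 : ℂ) + (m.2 : ℂ) * (r.2 : ℂ))))

/-- `d` (supported on `Λ`) satisfies the annihilation equation for `f` at `ℓ`:
`∑_{k ∈ Λ} d[k] ⋅ 2πi (ℓ-k)_x ⋅ f̂[ℓ-k] = 0` and likewise for the `y`-component. -/
def Annihilates (Λ : Finset (ℤ × ℤ)) (d : ℤ × ℤ → ℂ) (f : ℝ × ℝ → ℂ) (ℓ : ℤ × ℤ) : Prop :=
  (∑ k ∈ Λ, d k * (2 * Real.pi * Complex.I * (((ℓ - k).1 : ℂ))) * fourierCoeff2 f (ℓ - k)) = 0 ∧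
  (∑ k ∈ Λ, d k * (2 * Real.pi * Complex.I * (((ℓ - k).2 : ℂ))) * fourierCoeff2 f (ℓ - k)) = 0

/-- `μ` is a (integer-frequency) trigonometric polynomial: a nonzero finite sum
`∑_{k ∈ Λ} c[k] e^{2πi k·r}`. -/
def IsTrigPolyFn (μ : ℝ × ℝ → ℂ) : Prop :=
  (∃ (Λ : Finset (ℤ × ℤ)) (c : ℤ × ℤ → ℂ), μ = trigSum Λ c) ∧ μ ≠ 0

/-- The zero set of `μ` in `[0,1]²`. -/
def zeroSetOn (μ : ℝ × ℝ → ℂ) : Set (ℝ × ℝ) := {r | r ∈ box ∧ μ r = 0}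

/-- `γ` divides `μ` among trigonometric polynomials. -/
def TrigDivides (γ μ : ℝ × ℝ → ℂ) : Prop :=
  ∃ η : ℝ × ℝ → ℂ, IsTrigPolyFn η ∧ μ = fun r => γ r * η r

/-- `C` is a trigonometric curve: the zero set in `[0,1]²` of a trigonometric polynomial,
infinite and with no isolated points. -/
def IsTrigCurve (C : Set (ℝ × ℝ)) : Prop :=
  (∃ μ : ℝ × ℝ → ℂ, IsTrigPolyFn μ ∧ C = zeroSetOn μ) ∧ C.Infinite ∧
    ∀ x ∈ C, AccPt x (Filter.principal C)

/-- `μ` is a minimal polynomial of the trigonometric curve `C`: a real-valued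
trigonometric polynomial whose zero set in `[0,1]²` is `C` and which divides every
trigonometric polynomial vanishing on `C`. -/
def IsMinPoly (μ : ℝ × ℝ → ℂ) (C : Set (ℝ × ℝ)) : Prop :=
  IsTrigPolyFn μ ∧ (∀ r, (μ r).im = 0) ∧ C = zeroSetOn μ ∧
    ∀ ν : ℝ × ℝ → ℂ, IsTrigPolyFn ν → (∀ r ∈ C, ν r = 0) → TrigDivides μ ν

/-- The contraction `Λ' ⊖ Λ = {ℓ : ℓ + k ∈ Λ' for all k ∈ Λ}` (as a finset; for
nonempty `Λ` this agrees with the set-theoretic contraction). -/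
def shrink (Λ' Λ : Finset (ℤ × ℤ)) : Finset (ℤ × ℤ) :=
  (Λ' - Λ).filter fun ℓ => ∀ k ∈ Λ, ℓ + k ∈ Λ'

/-- The degree of a trigonometric polynomial given by coefficients `c` on `Λ`: the side
lengths of the smallest closed axis-aligned rectangle containing the frequency support
`{k ∈ Λ : c[k] ≠ 0}`. -/
def degOf (Λ : Finset (ℤ × ℤ)) (c : ℤ × ℤ → ℂ) : ℤ × ℤ :=
  ((((Λ.filter fun k => c k ≠ 0).image Prod.fst).max.unbotD 0)
      - (((Λ.filter fun k => c k ≠ 0).image Prod.fst).min.untopD 0),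
   (((Λ.filter fun k => c k ≠ 0).image Prod.snd).max.unbotD 0)
      - (((Λ.filter fun k => c k ≠ 0).image Prod.snd).min.untopD 0))

/-- A trigonometric polynomial `μ` is irreducible if in every factorization `μ = γ·η`
into trigonometric polynomials, one of the factors has degree `(0,0)`. -/
def IsIrredTrig (μ : ℝ × ℝ → ℂ) : Prop :=
  ∀ (Λγ Λη : Finset (ℤ × ℤ)) (cγ cη : ℤ × ℤ → ℂ),
    trigSum Λγ cγ ≠ 0 → trigSum Λη cη ≠ 0 →
    μ = (fun r => trigSum Λγ cγ r * trigSum Λη cη r) →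
    degOf Λγ cγ = (0, 0) ∨ degOf Λη cη = (0, 0)

/-!
Write `e(x) = exp(2πix)`. Every trigonometric polynomial has the form
`e(s·r) P(e(r₁), e(r₂))` with `P ∈ ℂ[X][Y]`, and after pulling out the largest powers of `X`
and `Y` one may assume that neither divides `P`. For such a `P`, a factorization into non-units
yields a factorization of `μ` into two factors of nonzero degree, so `P` is irreducible.
As `r ↦ (e(r₁), e(r₂))` is injective on `[0,1)²`, the polynomials `P` and `Q` attached to `μ`
and `ν` have infinitely many common zeros in `ℂ²`. If `P ∤ Q`, the resultant of `P` and `Q` with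
respect to `Y` is a nonzero polynomial in `X` (by Gauss' lemma, `P` and `Q` are coprime over
`ℂ(X)`), which vanishes at the first coordinate of every common zero; above each of its finitely
many roots `P` has only finitely many zeros. Hence `P ∣ Q`, and the quotient gives the cofactor.
-/

open Polynomial Polynomial.Bivariate

namespace Polynomial

theorem eq_zero_of_evalEval_eq_zero {R : Type*} [CommRing R] [IsDomain R] {S T : Set R}
    (hS : S.Infinite) (hT : T.Infinite) {p : R[X][Y]}
    (h : ∀ x ∈ S, ∀ y ∈ T, p.evalEval x y = 0) : p = 0 := by
  have hfiber (x) (hx : x ∈ S) : p.map (evalRingHom x) = 0 :=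
    eq_zero_of_infinite_isRoot _ <| hT.mono fun y hy => by
      simpa [IsRoot, map_evalRingHom_eval] using h x hx y hy
  ext j : 1
  refine eq_zero_of_infinite_isRoot _ <| hS.mono fun x hx => ?_
  simpa using congr_arg (coeff · j) (hfiber x hx)

theorem map_evalRingHom_eq_zero_iff {R : Type*} [CommRing R] {p : R[X][Y]} {x : R} :
    p.map (evalRingHom x) = 0 ↔ C (X - C x) ∣ p := by
  rw [C_dvd_iff_dvd_coeff]
  simp [dvd_iff_isRoot, Polynomial.ext_iff]

theorem resultant_ne_zero_of_irreducible_of_not_dvd {R : Type*} [CommRing R] [IsDomain R]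
    [IsGCDMonoid R] {P Q : R[X]} (hP : Irreducible P) (hdeg : P.natDegree ≠ 0) (hPQ : ¬ P ∣ Q) :
    P.resultant Q ≠ 0 := by
  set φ := algebraMap R (FractionRing R)
  have hφ : Function.Injective φ := IsFractionRing.injective R (FractionRing R)
  have hprim := hP.isPrimitive hdeg
  have hPφ : Irreducible (P.map φ) := hprim.irreducible_iff_irreducible_map_fraction_map.mp hP
  have hcop : IsCoprime (P.map φ) (Q.map φ) :=
    hPφ.coprime_iff_not_dvd.mpr (mt hprim.dvd_of_fraction_map_dvd_fraction_map hPQ)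
  have := resultant_ne_zero _ _ hcop
  rwa [natDegree_map_eq_of_injective hφ, natDegree_map_eq_of_injective hφ, resultant_map_map,
    map_ne_zero_iff _ hφ] at this

theorem evalEval_eq_sum_sum {R : Type*} [CommSemiring R] (x y : R) (p : R[X][Y]) :
    p.evalEval x y =
      ∑ j ∈ p.support, ∑ i ∈ (p.coeff j).support, (p.coeff j).coeff i * x ^ i * y ^ j := by
  rw [evalEval, eval_eq_sum (p := p), sum_def, eval_finsetSum]
  refine Finset.sum_congr rfl fun j _ => ?_
  rw [eval_mul, eval_pow, eval_C, eval_eq_sum, sum_def, Finset.sum_mul]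

variable {K : Type*} [Field K]

theorem finite_setOf_isRoot_and_evalEval_eq_zero {d : K[X]} (hd : d ≠ 0) {F : K[X][Y]}
    (hF : ∀ x, d.IsRoot x → ¬ C (X - C x) ∣ F) :
    {z : K × K | d.IsRoot z.1 ∧ F.evalEval z.1 z.2 = 0}.Finite := by
  have hroots := finite_setOfPred_isRoot hd
  refine (hroots.prod <| hroots.biUnion fun x hx => finite_setOfPred_isRoot
    (mt map_evalRingHom_eq_zero_iff.mp (hF x hx))).subset ?_
  rintro ⟨x, y⟩ ⟨hx, hy⟩
  exact ⟨hx, Set.mem_biUnion hx (by simpa [IsRoot, map_evalRingHom_eval] using hy)⟩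

theorem finite_setOf_evalEval_eq_zero_and_evalEval_eq_zero {P Q : K[X][Y]} (hP : Irreducible P)
    (hPQ : ¬ P ∣ Q) :
    {z : K × K | P.evalEval z.1 z.2 = 0 ∧ Q.evalEval z.1 z.2 = 0}.Finite := by
  by_cases hdeg : P.natDegree = 0
  · -- `P = C p`, and at each root `x` of `p` the irreducible `p` is associated to `X - C x`.
    obtain ⟨p, rfl⟩ := natDegree_eq_zero.mp hdeg
    have hp : Irreducible p := hP.of_map
    have hQ (x) (hx : p.IsRoot x) : ¬ C (X - C x) ∣ Q := by
      have hpx : p ∣ X - C x :=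
        ((irreducible_X_sub_C x).associated_of_dvd hp (dvd_iff_isRoot.mpr hx)).dvd'
      exact fun hdvd => hPQ ((_root_.map_dvd C hpx).trans hdvd)
    refine (finite_setOf_isRoot_and_evalEval_eq_zero hp.ne_zero hQ).subset ?_
    rintro z ⟨hz, hzQ⟩
    exact ⟨by rwa [evalEval_C] at hz, hzQ⟩
  · obtain ⟨A, B, -, -, hAB⟩ :=
      exists_mul_add_mul_eq_C_resultant P Q le_rfl le_rfl (Or.inl hdeg)
    have hP' (x) (_ : (P.resultant Q).IsRoot x) : ¬ C (X - C x) ∣ P := fun hdvd =>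
      not_isUnit_X_sub_C x (hP.isPrimitive hdeg _ hdvd)
    refine (finite_setOf_isRoot_and_evalEval_eq_zero
      (resultant_ne_zero_of_irreducible_of_not_dvd hP hdeg hPQ) hP').subset ?_
    rintro ⟨x, y⟩ ⟨hzP, hzQ⟩
    refine ⟨?_, hzP⟩
    have := congr_arg (evalEval x y) hAB
    rwa [evalEval_add, evalEval_mul, evalEval_mul, hzP, hzQ, zero_mul, zero_mul, add_zero,
      evalEval_C, eq_comm] at this

end Polynomial

theorem Finset.eq_of_max_unbotD_sub_min_untopD_eq_zero {α : Type*} [LinearOrder α] [AddGroup α]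
    {S : Finset α} (h : S.max.unbotD 0 - S.min.untopD 0 = 0) {a b : α} (ha : a ∈ S)
    (hb : b ∈ S) : a = b := by
  obtain ⟨M, hM⟩ := Finset.max_of_mem ha
  obtain ⟨m, hm⟩ := Finset.min_of_mem ha
  rw [hM, hm, WithBot.unbotD_coe, WithTop.untopD_coe, sub_eq_zero] at h
  subst h
  exact le_antisymm ((Finset.le_max_of_eq ha hM).trans (Finset.min_le_of_eq hb hm))
    ((Finset.le_max_of_eq hb hM).trans (Finset.min_le_of_eq ha hm))

theorem eq_of_degOf_eq_zero {Λ : Finset (ℤ × ℤ)} {c : ℤ × ℤ → ℂ} (h : degOf Λ c = (0, 0))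
    {k l : ℤ × ℤ} (hk : k ∈ Λ) (hl : l ∈ Λ) (hck : c k ≠ 0) (hcl : c l ≠ 0) : k = l := by
  have hk' : k ∈ Λ.filter (c · ≠ 0) := Finset.mem_filter.2 ⟨hk, hck⟩
  have hl' : l ∈ Λ.filter (c · ≠ 0) := Finset.mem_filter.2 ⟨hl, hcl⟩
  rw [degOf, Prod.mk.injEq] at h
  exact Prod.ext
    (Finset.eq_of_max_unbotD_sub_min_untopD_eq_zero h.1 (Finset.mem_image_of_mem _ hk')
      (Finset.mem_image_of_mem _ hl'))
    (Finset.eq_of_max_unbotD_sub_min_untopD_eq_zero h.2 (Finset.mem_image_of_mem _ hk')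
      (Finset.mem_image_of_mem _ hl'))

def e1 (x : ℝ) : ℂ := Complex.exp (2 * Real.pi * Complex.I * x)

theorem e1_ne_zero (x : ℝ) : e1 x ≠ 0 := Complex.exp_ne_zero _

theorem injOn_e1 : InjOn e1 (Ico 0 1) := by
  intro x hx y hy h
  obtain ⟨n, hn⟩ := Complex.exp_eq_exp_iff_exists_int.mp h
  have hxy : x = y + n := by
    have : (x : ℂ) = y + n := mul_left_cancel₀ Complex.two_pi_I_ne_zero (by linear_combination hn)
    exact_mod_cast this
  have hfloor : ⌊x⌋ = ⌊y⌋ + n := by rw [hxy, Int.floor_add_intCast]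
  rw [Int.floor_eq_zero_iff.mpr hx, Int.floor_eq_zero_iff.mpr hy, zero_add] at hfloor
  simp [hxy, ← hfloor]

theorem infinite_range_e1 : (range e1).Infinite :=
  ((Ico_infinite zero_lt_one).image injOn_e1).mono (image_subset_range _ _)

theorem e2_eq (k : ℤ × ℤ) (r : ℝ × ℝ) : e2 k r = e1 r.1 ^ k.1 * e1 r.2 ^ k.2 := by
  rw [e2, e1, e1, ← Complex.exp_int_mul, ← Complex.exp_int_mul, ← Complex.exp_add]
  ring_nf

theorem e2_add (k l : ℤ × ℤ) (r : ℝ × ℝ) : e2 (k + l) r = e2 k r * e2 l r := by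
  simp only [e2_eq, Prod.fst_add, Prod.snd_add, zpow_add₀ (e1_ne_zero _)]
  ring

theorem e2_eq_pow_toNat {v : ℤ × ℤ} (hv : 0 ≤ v) (r : ℝ × ℝ) :
    e2 v r = e1 r.1 ^ v.1.toNat * e1 r.2 ^ v.2.toNat := by
  rw [e2_eq, ← zpow_natCast, ← zpow_natCast, Int.toNat_of_nonneg hv.1, Int.toNat_of_nonneg hv.2]

theorem e2_ne_zero (k : ℤ × ℤ) (r : ℝ × ℝ) : e2 k r ≠ 0 := Complex.exp_ne_zero _

def polyTrig (s : ℤ × ℤ) (P : ℂ[X][Y]) (r : ℝ × ℝ) : ℂ :=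
  e2 s r * P.evalEval (e1 r.1) (e1 r.2)

theorem polyTrig_eq_zero_iff {s : ℤ × ℤ} {P : ℂ[X][Y]} {r : ℝ × ℝ} :
    polyTrig s P r = 0 ↔ P.evalEval (e1 r.1) (e1 r.2) = 0 := by
  simp [polyTrig, e2_ne_zero]

theorem polyTrig_ne_zero {s : ℤ × ℤ} {P : ℂ[X][Y]} (hP : P ≠ 0) : polyTrig s P ≠ 0 := by
  refine fun h => hP (eq_zero_of_evalEval_eq_zero infinite_range_e1 infinite_range_e1 ?_)
  rintro _ ⟨x, rfl⟩ _ ⟨y, rfl⟩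
  exact polyTrig_eq_zero_iff.mp (congr_fun h (x, y))

theorem polyTrig_mul (s t : ℤ × ℤ) (A B : ℂ[X][Y]) :
    polyTrig (s + t) (A * B) = fun r => polyTrig s A r * polyTrig t B r := by
  ext r
  simp only [polyTrig, e2_add, evalEval_mul]
  ring

def freqSupport (H : ℂ[X][Y]) (s : ℤ × ℤ) : Finset (ℤ × ℤ) :=
  H.support.biUnion fun j => (H.coeff j).support.image fun i : ℕ => s + ((i : ℤ), (j : ℤ))

def freqCoeff (H : ℂ[X][Y]) (s k : ℤ × ℤ) : ℂ :=
  (H.coeff (k - s).2.toNat).coeff (k - s).1.toNat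

theorem freqCoeff_add (H : ℂ[X][Y]) (s : ℤ × ℤ) (i j : ℕ) :
    freqCoeff H s (s + ((i : ℤ), (j : ℤ))) = (H.coeff j).coeff i := by
  simp [freqCoeff]

theorem mem_freqSupport {H : ℂ[X][Y]} {s k : ℤ × ℤ} :
    k ∈ freqSupport H s ↔ ∃ i j : ℕ, (H.coeff j).coeff i ≠ 0 ∧ s + ((i : ℤ), (j : ℤ)) = k := by
  simp only [freqSupport, Finset.mem_biUnion, Finset.mem_image, mem_support_iff]
  exact ⟨fun ⟨j, _, i, hi, hk⟩ => ⟨i, j, hi, hk⟩,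
    fun ⟨i, j, hi, hk⟩ => ⟨j, fun h => hi (by simp [h]), i, hi, hk⟩⟩

theorem trigSum_freqSupport (H : ℂ[X][Y]) (s : ℤ × ℤ) :
    trigSum (freqSupport H s) (freqCoeff H s) = polyTrig s H := by
  ext r
  rw [trigSum, freqSupport, Finset.sum_biUnion, polyTrig, evalEval_eq_sum_sum, Finset.mul_sum]
  · refine Finset.sum_congr rfl fun j _ => ?_
    rw [Finset.sum_image fun i _ i' _ h => by simpa using h, Finset.mul_sum]
    refine Finset.sum_congr rfl fun i _ => ?_
    rw [freqCoeff_add, e2_add]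
    simp only [e2_eq, zpow_natCast]
    ring
  · intro j _ j' _ hjj'
    simp only [Function.onFun, Finset.disjoint_left, Finset.mem_image]
    rintro _ ⟨i, _, rfl⟩ ⟨i', _, h⟩
    exact hjj' (by simpa using (congr_arg Prod.snd h).symm)

theorem exists_eq_polyTrig {μ : ℝ × ℝ → ℂ} (hμ : IsTrigPolyFn μ) :
    ∃ s P, ¬ C X ∣ P ∧ ¬ Y ∣ P ∧ μ = polyTrig s P := by
  obtain ⟨⟨Λ, c, rfl⟩, hne⟩ := hμ
  obtain ⟨M, hM⟩ := Λ.finite_toSet.bddBelow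
  set P₀ : ℂ[X][Y] := ∑ k ∈ Λ, C (C (c k) * X ^ (k - M).1.toNat) * Y ^ (k - M).2.toNat
  have h₀ : trigSum Λ c = polyTrig M P₀ := by
    ext r
    simp only [trigSum, polyTrig, P₀, evalEval_finsetSum, evalEval_mul, evalEval_C, evalEval_pow,
      evalEval_X, eval_mul, eval_C, eval_pow, eval_X, Finset.mul_sum]
    refine Finset.sum_congr rfl fun k hk => ?_
    rw [← add_sub_cancel M k, e2_add, add_sub_cancel, e2_eq_pow_toNat (sub_nonneg.2 (hM hk))]
    ring
  clear_value P₀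
  have hP₀ : P₀ ≠ 0 := fun h => hne (by rw [h₀, h]; ext; simp [polyTrig])
  obtain ⟨n, P₁, hP₁, rfl⟩ := WfDvdMonoid.max_power_factor' hP₀ (mt isUnit_C.mp not_isUnit_X)
  obtain ⟨m, P, hP, rfl⟩ := WfDvdMonoid.max_power_factor' (right_ne_zero_of_mul hP₀) not_isUnit_X
  refine ⟨M + ((n : ℤ), (m : ℤ)), P, fun h => hP₁ (h.mul_left _), hP, ?_⟩
  rw [h₀]
  ext r
  simp only [polyTrig, evalEval_mul, evalEval_pow, evalEval_C, evalEval_X, eval_X, e2_eq,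
    Prod.fst_add, Prod.snd_add, zpow_add₀ (e1_ne_zero _), zpow_natCast]
  ring

theorem isTrigPolyFn_polyTrig {H : ℂ[X][Y]} (hH : H ≠ 0) (s : ℤ × ℤ) :
    IsTrigPolyFn (polyTrig s H) :=
  ⟨⟨_, _, (trigSum_freqSupport H s).symm⟩, polyTrig_ne_zero hH⟩

theorem eq_of_degOf_freqSupport_eq_zero {H : ℂ[X][Y]} {s : ℤ × ℤ}
    (h : degOf (freqSupport H s) (freqCoeff H s) = (0, 0)) {i j i' j' : ℕ}
    (hij : (H.coeff j).coeff i ≠ 0) (hij' : (H.coeff j').coeff i' ≠ 0) : i = i' ∧ j = j' := by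
  have := eq_of_degOf_eq_zero h (mem_freqSupport.2 ⟨i, j, hij, rfl⟩)
    (mem_freqSupport.2 ⟨i', j', hij', rfl⟩) (by rwa [freqCoeff_add]) (by rwa [freqCoeff_add])
  simpa using this

theorem isUnit_of_dvd_of_degOf_eq_zero {A P : ℂ[X][Y]} (hAP : A ∣ P) (hX : ¬ C X ∣ P)
    (hY : ¬ Y ∣ P) {s : ℤ × ℤ} (h : degOf (freqSupport A s) (freqCoeff A s) = (0, 0)) :
    IsUnit A := by
  obtain ⟨i, hi⟩ : ∃ i, (A.coeff 0).coeff i ≠ 0 := by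
    by_contra! h0
    exact hY ((X_dvd_iff.2 (Polynomial.ext h0)).trans hAP)
  obtain ⟨j, hj⟩ : ∃ j, (A.coeff j).coeff 0 ≠ 0 := by
    by_contra! h0
    exact hX (((C_dvd_iff_dvd_coeff _ _).2 fun j => X_dvd_iff.2 (h0 j)).trans hAP)
  have hsupp (i' j' : ℕ) (h' : (A.coeff j').coeff i' ≠ 0) : i' = 0 ∧ j' = 0 :=
    ⟨(eq_of_degOf_freqSupport_eq_zero h h' hj).1, (eq_of_degOf_freqSupport_eq_zero h h' hi).2⟩
  have hdegY : A.natDegree ≤ 0 := natDegree_le_iff_coeff_eq_zero.2 fun j' hj' =>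
    Polynomial.ext fun i' => by_contra fun h' => hj'.ne' (hsupp i' j' h').2
  have hdegX : (A.coeff 0).natDegree ≤ 0 := natDegree_le_iff_coeff_eq_zero.2 fun i' hi' =>
    by_contra fun h' => hi'.ne' (hsupp i' 0 h').1
  obtain rfl := (hsupp i 0 hi).1
  rw [eq_C_of_natDegree_le_zero hdegY, eq_C_of_natDegree_le_zero hdegX]
  exact isUnit_C.2 (isUnit_C.2 (isUnit_iff_ne_zero.2 hi))

theorem irreducible_of_isIrredTrig {s : ℤ × ℤ} {P : ℂ[X][Y]} (hirr : IsIrredTrig (polyTrig s P))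
    (hX : ¬ C X ∣ P) (hY : ¬ Y ∣ P) (hu : ¬ IsUnit P) : Irreducible P := by
  refine ⟨hu, fun A B hAB => ?_⟩
  have hAB0 : A * B ≠ 0 := fun h => hY (hAB ▸ h ▸ dvd_zero _)
  have hfactor : polyTrig s P = fun r => trigSum (freqSupport A s) (freqCoeff A s) r *
      trigSum (freqSupport B 0) (freqCoeff B 0) r := by
    rw [trigSum_freqSupport, trigSum_freqSupport, ← polyTrig_mul, add_zero, hAB]
  refine (hirr _ _ _ _ ?_ ?_ hfactor).imp
    (isUnit_of_dvd_of_degOf_eq_zero (hAB ▸ dvd_mul_right A B) hX hY)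
    (isUnit_of_dvd_of_degOf_eq_zero (hAB ▸ dvd_mul_left B A) hX hY)
  · rw [trigSum_freqSupport]
    exact polyTrig_ne_zero (left_ne_zero_of_mul hAB0)
  · rw [trigSum_freqSupport]
    exact polyTrig_ne_zero (right_ne_zero_of_mul hAB0)

theorem infinite_setOf_evalEval_eq_zero {s t : ℤ × ℤ} {P Q : ℂ[X][Y]}
    (h : {r : ℝ × ℝ | r ∈ Ico (0:ℝ) 1 ×ˢ Ico (0:ℝ) 1 ∧
      polyTrig s P r = 0 ∧ polyTrig t Q r = 0}.Infinite) :
    {z : ℂ × ℂ | P.evalEval z.1 z.2 = 0 ∧ Q.evalEval z.1 z.2 = 0}.Infinite := by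
  refine (h.image ((injOn_e1.prodMap injOn_e1).mono fun r hr => hr.1)).mono ?_
  rintro _ ⟨r, ⟨-, hP, hQ⟩, rfl⟩
  exact ⟨polyTrig_eq_zero_iff.mp hP, polyTrig_eq_zero_iff.mp hQ⟩

/-- If `μ` is an irreducible trigonometric polynomial and `ν` a
trigonometric polynomial with infinitely many common zeros with `μ` in `[0,1)²`, then
`μ` divides `ν`. -/
theorem stmt13 (μ ν : ℝ × ℝ → ℂ) (hμ : IsTrigPolyFn μ) (hν : IsTrigPolyFn ν)
    (hirr : IsIrredTrig μ)
    (hinf : {r : ℝ × ℝ | r ∈ Set.Ico (0:ℝ) 1 ×ˢ Set.Ico (0:ℝ) 1 ∧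
      μ r = 0 ∧ ν r = 0}.Infinite) :
    TrigDivides μ ν := by
  obtain ⟨s, P, hPX, hPY, rfl⟩ := exists_eq_polyTrig hμ
  obtain ⟨t, Q, -, hQY, rfl⟩ := exists_eq_polyTrig hν
  have hzeros := infinite_setOf_evalEval_eq_zero hinf
  have hP : Irreducible P := by
    refine irreducible_of_isIrredTrig hirr hPX hPY fun hu => ?_
    obtain ⟨z, hPz, -⟩ := hzeros.nonempty
    exact (hu.map (evalEvalRingHom z.1 z.2)).ne_zero hPz
  obtain ⟨H, rfl⟩ : P ∣ Q := by
    by_contra hPQ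
    exact hzeros (finite_setOf_evalEval_eq_zero_and_evalEval_eq_zero hP hPQ)
  have hH : H ≠ 0 := right_ne_zero_of_mul fun h => hQY (h ▸ dvd_zero _)
  refine ⟨polyTrig (t - s) H, isTrigPolyFn_polyTrig hH _, ?_⟩
  rw [← polyTrig_mul, add_sub_cancel]

end
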